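/- arXiv:1201.5733 — 6 statements merged into one kernel-verified Lean document; each statement's English description precedes it below -/
import Mathlib

section
/- Let a < b be real numbers, X = [a,b], and let {h_0, h_1, …, h_m} ⊂ ℝ∖{0} be an additively ℚ-independent set. Then for each continuous function f : ⋃_{j=0}^m h_j X → ℂ with |f| ≡ 1 and each ε > 0, the set A_{f,ε}(h_0,…,h_m) := { σ ∈ P([a,b]) : there exists t ∈ ℝ with ‖f − ξ_t‖_{L²(ℝ, (1/(m+1)) Σ_{j=0}^m σ_{h_j})} < ε } is open and dense in P([a,b]). -/
open MeasureTheory Filter Topology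
open scoped ENNReal NNReal

/-- `ξ_s(x) = exp(2πisx)`. -/
noncomputable def xi (s x : ℝ) : ℂ := Complex.exp (2 * Real.pi * Complex.I * s * x)

/-- A set `A ⊆ ℝ` is additively `ℚ`-independent. -/
def QIndep (A : Set ℝ) : Prop :=
  ∀ (m : ℕ) (a : Fin m → ℝ), (∀ i, a i ∈ A) → Function.Injective a →
    ∀ k : Fin m → ℤ, (∑ i, (k i : ℝ) * a i) = 0 → ∀ i, k i = 0

/-- The measure on `ℝ` induced by a probability measure on a subset of `ℝ`. -/
noncomputable def measOn {X : Set ℝ} (σ : ProbabilityMeasure X) : Measure ℝ :=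
  σ.toMeasure.map Subtype.val

/-- The set `A_{f,ε}(h_0, …, h_m)`. -/
noncomputable def Afe (a b : ℝ) (m : ℕ) (h : Fin (m + 1) → ℝ) (f : ℝ → ℂ) (ε : ℝ) :
    Set (ProbabilityMeasure (Set.Icc a b)) :=
  {σ | ∃ t : ℝ, eLpNorm (fun x => f x - xi t x) 2
      (((m + 1 : ℝ≥0∞))⁻¹ • ∑ j, (measOn σ).map (fun x => h j * x)) < ENNReal.ofReal ε}

/-!
Openness: by the change of variables `y = h_j x`, the squared distance `‖f - ξ_t‖²` in the
definition of `A_{f,ε}` is `∫ G_t dσ` for a continuous function `G_t` on `[a, b]`, so `A_{f,ε}` is a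
union over `t` of weakly open sets `{σ | ∫ G_t dσ < ε²}`.

Density: every `σ` is the weak limit of its pushforwards under maps that move points by at most
`1/(n+1)` onto finitely many points `p_i`. Avoiding countably many hyperplanes, a null set, the
`p_i` can be chosen so that the numbers `h_j p_i` are `ℤ`-independent; Kronecker's theorem then
gives a `t` with `ξ_t` within `ε/2` of `f` at every `h_j p_i`, so these pushforwards lie in
`A_{f,ε}`.

Kronecker's theorem is proved by averaging: for `ℤ`-independent `r_i`, only the constant term
survives in the mean over `t` of `∏ᵢ cos^{2M} (π (r_i t - θ_i))`, which is `(C(2M, M) / 4^M)^N`.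
Since this decays only polynomially in `M`, the product exceeds `β^M` somewhere for any `β < 1`.
-/

open scoped Real BoundedContinuousFunction
open Complex (I)

/-! ### Kronecker's theorem -/

lemma continuous_xi (s : ℝ) : Continuous (xi s) := by
  unfold xi; fun_prop

lemma norm_xi (s x : ℝ) : ‖xi s x‖ = 1 := by
  rw [xi, Complex.norm_exp]; simp

lemma tendsto_average_xi (c : ℝ) :
    Tendsto (fun T : ℝ => (∫ t in (0 : ℝ)..T, xi c t) / T) atTop
      (𝓝 (if c = 0 then 1 else 0)) := by
  split_ifs with hc
  · refine tendsto_const_nhds.congr' ?_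
    filter_upwards [eventually_ne_atTop 0] with T hT
    simp [xi, hc, hT]
  have hc' : (2 * π * I * c : ℂ) ≠ 0 := by simp [hc, Real.pi_ne_zero]
  have hint (T : ℝ) : ∫ t in (0 : ℝ)..T, xi c t = (xi c T - 1) / (2 * π * I * c) := by
    simpa [xi] using integral_exp_mul_complex hc' (a := 0) (b := T)
  refine squeeze_zero_norm' (a := fun T => 2 / ‖(2 * π * I * c : ℂ)‖ / T) ?_
    (tendsto_const_nhds.div_atTop tendsto_id)
  filter_upwards [eventually_gt_atTop 0] with T hT
  have hle : ‖xi c T - 1‖ ≤ 2 := (norm_sub_le _ _).trans (by simp [norm_xi]; norm_num)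
  rw [hint, norm_div, norm_div, Complex.norm_real, Real.norm_of_nonneg hT.le]
  gcongr

lemma tendsto_average_sum_xi {α : Type*} (S : Finset α) (K : α → ℂ) (ω : α → ℝ) :
    Tendsto (fun T : ℝ => (∫ t in (0 : ℝ)..T, ∑ s ∈ S, K s * xi (ω s) t) / T) atTop
      (𝓝 (∑ s ∈ S, if ω s = 0 then K s else 0)) := by
  have hsplit (T : ℝ) : (∫ t in (0 : ℝ)..T, ∑ s ∈ S, K s * xi (ω s) t) / T =
      ∑ s ∈ S, K s * ((∫ t in (0 : ℝ)..T, xi (ω s) t) / T) := by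
    rw [intervalIntegral.integral_finsetSum fun s _ =>
      (((continuous_xi _).const_mul _).intervalIntegrable _ _), Finset.sum_div]
    simp only [intervalIntegral.integral_const_mul, mul_div_assoc]
  simp only [hsplit]
  refine tendsto_finsetSum _ fun s _ => ?_
  simpa using (tendsto_average_xi (ω s)).const_mul (K s)

lemma exists_lt_of_tendsto_average {P : ℝ → ℝ} (hP : Continuous P) {c B : ℝ}
    (hc : Tendsto (fun T : ℝ => (∫ t in (0 : ℝ)..T, P t) / T) atTop (𝓝 c)) (hB : B < c) :
    ∃ t, B < P t := by
  by_contra! hle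
  refine hB.not_ge (le_of_tendsto hc ?_)
  filter_upwards [eventually_gt_atTop 0] with T hT
  rw [div_le_iff₀ hT]
  calc ∫ t in (0 : ℝ)..T, P t ≤ ∫ _ in (0 : ℝ)..T, B :=
        intervalIntegral.integral_mono_on hT.le (hP.intervalIntegrable _ _)
          intervalIntegrable_const fun t _ => hle t
    _ = B * T := by simp [mul_comm]

lemma xi_mul_sub (s r t θ : ℝ) : xi s (r * t - θ) = xi (s * r) t * xi s (-θ) := by
  simp only [xi, ← Complex.exp_add]
  congr 1
  push_cast
  ring

lemma prod_xi {ι : Type*} (S : Finset ι) (s : ι → ℝ) (x : ℝ) :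
    ∏ i ∈ S, xi (s i) x = xi (∑ i ∈ S, s i) x := by
  simp only [xi, ← Complex.exp_sum]
  push_cast
  simp only [Finset.mul_sum, Finset.sum_mul]

/-- The binomial expansion of `(2 cos πy)^{2M} = (e^{πiy} + e^{-πiy})^{2M}`. -/
lemma cos_pi_mul_pow_eq_sum (M : ℕ) (y : ℝ) :
    ((Real.cos (π * y) ^ (2 * M) : ℝ) : ℂ) =
      ∑ c ∈ Finset.range (2 * M + 1), ((2 * M).choose c / 4 ^ M : ℂ) * xi (c - M) y := by
  set u := Complex.exp (π * y * I)
  set v := Complex.exp (-(π * y * I))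
  have hcos : ((Real.cos (π * y) : ℝ) : ℂ) = (u + v) / 2 := by
    rw [Complex.ofReal_cos, Complex.cos, neg_mul]; push_cast; rfl
  have huv (c : ℕ) (hc : c ≤ 2 * M) : u ^ c * v ^ (2 * M - c) = xi (c - M) y := by
    rw [← Complex.exp_nat_mul, ← Complex.exp_nat_mul, ← Complex.exp_add, xi, Nat.cast_sub hc]
    congr 1
    push_cast
    ring
  have h4 : (4 : ℂ) ^ M = 2 ^ (2 * M) := by rw [pow_mul]; norm_num
  rw [Complex.ofReal_pow, hcos, div_pow, add_pow, Finset.sum_div, h4]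
  refine Finset.sum_congr rfl fun c hc => ?_
  rw [huv c (Nat.lt_succ_iff.mp (Finset.mem_range.mp hc))]
  ring

lemma tendsto_average_prod_cos_pow {ι : Type*} [Fintype ι] {r : ι → ℝ}
    (hr : LinearIndependent ℤ r) (θ : ι → ℝ) (M : ℕ) :
    Tendsto (fun T : ℝ => (∫ t in (0 : ℝ)..T, ∏ i, Real.cos (π * (r i * t - θ i)) ^ (2 * M)) / T)
      atTop (𝓝 (((2 * M).choose M / 4 ^ M : ℝ) ^ Fintype.card ι)) := by
  classical
  set a : ℕ → ℂ := fun c => (2 * M).choose c / 4 ^ M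
  set S := Fintype.piFinset fun _ : ι => Finset.range (2 * M + 1)
  set ω : (ι → ℕ) → ℝ := fun p => ∑ i, ((p i : ℝ) - M) * r i
  set K : (ι → ℕ) → ℂ := fun p => ∏ i, a (p i) * xi ((p i : ℝ) - M) (-θ i)
  have hexpand (t : ℝ) : ((∏ i, Real.cos (π * (r i * t - θ i)) ^ (2 * M) : ℝ) : ℂ) =
      ∑ p ∈ S, K p * xi (ω p) t := by
    simp only [Complex.ofReal_prod, cos_pi_mul_pow_eq_sum, Finset.prod_univ_sum]
    refine Finset.sum_congr rfl fun p _ => ?_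
    simp only [xi_mul_sub, K, ω, ← prod_xi, ← Finset.prod_mul_distrib]
    exact Finset.prod_congr rfl fun i _ => by ring
  -- by independence, the only frequency `ω p` that vanishes is that of `p ≡ M`
  have hmean : (∑ p ∈ S, if ω p = 0 then K p else 0) = a M ^ Fintype.card ι := by
    rw [Finset.sum_eq_single (fun _ => M)]
    · simp [ω, K, xi]
    · intro p _ hp
      rw [if_neg]
      intro h0
      apply hp
      funext i
      have := Fintype.linearIndependent_iff.mp hr (fun i => (p i : ℤ) - M)
        (by simpa [ω] using h0) i
      omega
    · intro h
      exact absurd (by simp [S]; omega) h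
  rw [← Filter.tendsto_ofReal_iff]
  convert tendsto_average_sum_xi S K ω using 2 with T
  · rw [Complex.ofReal_div, ← intervalIntegral.integral_ofReal]
    simp only [hexpand]
  · rw [hmean]
    push_cast
    rfl

lemma exists_pos_mul_pow_lt_one (N : ℕ) {β : ℝ} (h0 : 0 ≤ β) (h1 : β < 1) :
    ∃ M : ℕ, 0 < M ∧ (2 * M : ℝ) ^ N * β ^ M < 1 := by
  have hlim : Tendsto (fun M : ℕ => 2 ^ N * ((M : ℝ) ^ N * β ^ M)) atTop (𝓝 0) := by
    simpa using (tendsto_pow_const_mul_const_pow_of_lt_one N h0 h1).const_mul (2 ^ N)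
  obtain ⟨M, hM, hlt⟩ :=
    ((eventually_gt_atTop 0).and (hlim.eventually (gt_mem_nhds one_pos))).exists
  exact ⟨M, hM, by rwa [mul_pow, mul_assoc]⟩

lemma inv_two_mul_le_choose_div_four_pow {M : ℕ} (hM : 0 < M) :
    (2 * M : ℝ)⁻¹ ≤ (2 * M).choose M / 4 ^ M := by
  have h := Nat.four_pow_le_two_mul_self_mul_centralBinom M hM
  rw [Nat.centralBinom_eq_two_mul_choose] at h
  rw [inv_eq_one_div, div_le_div_iff₀ (by positivity) (by positivity), one_mul, mul_comm]
  exact_mod_cast h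

lemma exists_forall_lt_cos_sq {ι : Type*} [Fintype ι] {r : ι → ℝ} (hr : LinearIndependent ℤ r)
    (θ : ι → ℝ) {β : ℝ} (h0 : 0 ≤ β) (h1 : β < 1) :
    ∃ t : ℝ, ∀ i, β < Real.cos (π * (r i * t - θ i)) ^ 2 := by
  classical
  obtain ⟨M, hM, hβM⟩ := exists_pos_mul_pow_lt_one (Fintype.card ι) h0 h1
  have hmean_gt : β ^ M < ((2 * M).choose M / 4 ^ M : ℝ) ^ Fintype.card ι := by
    calc β ^ M < ((2 * M : ℝ) ^ Fintype.card ι)⁻¹ := by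
          rwa [← one_div, lt_div_iff₀ (by positivity), mul_comm]
      _ = ((2 * M : ℝ)⁻¹) ^ Fintype.card ι := (inv_pow _ _).symm
      _ ≤ _ := by gcongr; exact inv_two_mul_le_choose_div_four_pow hM
  obtain ⟨t, ht⟩ := exists_lt_of_tendsto_average (by fun_prop)
    (tendsto_average_prod_cos_pow hr θ M) hmean_gt
  refine ⟨t, fun i => ?_⟩
  simp only [pow_mul] at ht
  have hfactor : ∏ j, (Real.cos (π * (r j * t - θ j)) ^ 2) ^ M ≤
      (Real.cos (π * (r i * t - θ i)) ^ 2) ^ M := by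
    rw [← Finset.mul_prod_erase _ _ (Finset.mem_univ i)]
    refine mul_le_of_le_one_right (by positivity) (Finset.prod_le_one (fun _ _ => by positivity)
      fun j _ => pow_le_one₀ (sq_nonneg _) (Real.cos_sq_le_one _))
  exact lt_of_pow_lt_pow_left₀ M (sq_nonneg _) (ht.trans_le hfactor)

lemma norm_cexp_mul_I_sub_cexp_mul_I (x y : ℝ) :
    ‖Complex.exp (x * I) - Complex.exp (y * I)‖ = 2 * |Real.sin ((x - y) / 2)| := by
  have hfactor : Complex.exp (x * I) - Complex.exp (y * I) =
      Complex.exp (y * I) * (Complex.exp (I * (x - y : ℝ)) - 1) := by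
    rw [mul_sub, mul_one, ← Complex.exp_add]
    push_cast
    ring_nf
  rw [hfactor, norm_mul, Complex.norm_exp_ofReal_mul_I, one_mul,
    Complex.norm_exp_I_mul_ofReal_sub_one, norm_mul, Real.norm_eq_abs]
  norm_num

theorem exists_forall_norm_xi_sub_lt {ι : Type*} [Fintype ι] {r : ι → ℝ}
    (hr : LinearIndependent ℤ r) {z : ι → ℂ} (hz : ∀ i, ‖z i‖ = 1) {δ : ℝ} (hδ : 0 < δ) :
    ∃ t : ℝ, ∀ i, ‖xi t (r i) - z i‖ < δ := by
  obtain ⟨t, ht⟩ := exists_forall_lt_cos_sq hr (fun i => (z i).arg / (2 * π))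
    (le_max_left 0 (1 - δ ^ 2 / 4)) (max_lt one_pos (by linarith [sq_pos_of_pos hδ]))
  refine ⟨t, fun i => ?_⟩
  have hz_exp : z i = Complex.exp ((z i).arg * I) := by
    simpa [hz i] using (Complex.norm_mul_exp_arg_mul_I (z i)).symm
  have hxi : xi t (r i) = Complex.exp ((2 * π * (r i * t) : ℝ) * I) := by
    rw [xi]; push_cast; ring_nf
  have hsin : (2 * |Real.sin (π * (r i * t - (z i).arg / (2 * π)))|) ^ 2 < δ ^ 2 := by
    have hcos := (le_max_right _ _).trans_lt (ht i)
    rw [mul_pow, sq_abs, Real.sin_sq]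
    linarith
  have harg : π * (r i * t - (z i).arg / (2 * π)) = (2 * π * (r i * t) - (z i).arg) / 2 := by
    field_simp
  rw [hxi, hz_exp, norm_cexp_mul_I_sub_cexp_mul_I, ← harg]
  exact lt_of_pow_lt_pow_left₀ 2 hδ.le hsin

/-! ### Approximation by finitely supported measures -/

lemma exists_mem_pi_Ioo_linearIndependent {ι κ : Type*} [Fintype ι] [Fintype κ]
    {h : κ → ℝ} (hh : LinearIndependent ℤ h) {u v : ι → ℝ} (huv : ∀ i, u i < v i) :
    ∃ p : ι → ℝ, (∀ i, p i ∈ Set.Ioo (u i) (v i)) ∧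
      LinearIndependent ℤ (fun ij : ι × κ => h ij.2 * p ij.1) := by
  classical
  let L (K : ι × κ → ℤ) : (ι → ℝ) →ₗ[ℝ] ℝ :=
    ∑ ij, ((K ij : ℝ) * h ij.2) • LinearMap.proj ij.1
  have hL (K : ι × κ → ℤ) (p : ι → ℝ) : L K p = ∑ ij, (K ij : ℝ) * (h ij.2 * p ij.1) := by
    simp only [L, LinearMap.sum_apply, LinearMap.smul_apply, LinearMap.proj_apply, smul_eq_mul,
      mul_assoc]
  -- the configurations `p` with a nontrivial relation lie in countably many proper hyperplanes
  have hnull : volume (⋃ K ∈ {K : ι × κ → ℤ | K ≠ 0}, (LinearMap.ker (L K) : Set (ι → ℝ))) = 0 := by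
    refine (measure_biUnion_null_iff (Set.to_countable _)).mpr fun K hK => ?_
    refine Measure.addHaar_submodule volume _ fun htop => ?_
    obtain ⟨⟨i, j⟩, hij⟩ := Function.ne_iff.mp hK
    have hrow : ∑ j, (K (i, j) : ℝ) * h j = 0 := by
      have := LinearMap.mem_ker.mp (htop ▸ Submodule.mem_top : Pi.single i 1 ∈ LinearMap.ker (L K))
      simpa [hL, Fintype.sum_prod_type, Pi.single_apply] using this
    exact hij (Fintype.linearIndependent_iff.mp hh (fun j => K (i, j)) (by simpa using hrow) j)
  have hbox : volume ((Set.univ.pi fun i => Set.Ioo (u i) (v i)) \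
      ⋃ K ∈ {K : ι × κ → ℤ | K ≠ 0}, (LinearMap.ker (L K) : Set (ι → ℝ))) ≠ 0 := by
    rw [measure_sdiff_null hnull, Real.volume_pi_Ioo]
    simp [Finset.prod_eq_zero_iff, huv]
  obtain ⟨p, hp, hpgood⟩ := nonempty_of_measure_ne_zero hbox
  refine ⟨p, fun i => hp i (Set.mem_univ i), Fintype.linearIndependent_iff.mpr fun K hK => ?_⟩
  by_contra hne
  exact hpgood (Set.mem_biUnion (fun hK0 => hne (congrFun hK0)) (by simpa [hL] using hK))

lemma MeasureTheory.ProbabilityMeasure.tendsto_map_of_tendsto {Ω ι : Type*} [TopologicalSpace Ω]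
    [MeasurableSpace Ω] [OpensMeasurableSpace Ω] {L : Filter ι} [L.IsCountablyGenerated]
    (σ : ProbabilityMeasure Ω) {q : ι → Ω → Ω} (hq : ∀ i, Measurable (q i))
    (hlim : ∀ x, Tendsto (fun n => q n x) L (𝓝 x)) :
    Tendsto (fun n => σ.map (hq n).aemeasurable) L (𝓝 σ) := by
  refine ProbabilityMeasure.tendsto_iff_forall_integral_tendsto.mpr fun g => ?_
  simp only [ProbabilityMeasure.toMeasure_map]
  have hmap (n : ι) : ∫ x, g x ∂(σ : Measure Ω).map (q n) = ∫ x, g (q n x) ∂σ :=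
    integral_map (hq n).aemeasurable g.continuous.aestronglyMeasurable
  simp only [hmap]
  exact tendsto_integral_filter_of_dominated_convergence (fun _ => ‖g‖)
    (.of_forall fun n => (g.continuous.measurable.comp (hq n)).aestronglyMeasurable)
    (.of_forall fun n => .of_forall fun x => g.norm_coe_le_norm _) (integrable_const _)
    (.of_forall fun x => (g.continuous.tendsto x).comp (hlim x))

lemma mem_Icc_min_floor {a ℓ x : ℝ} (hℓ : 0 < ℓ) (n : ℕ) (hax : a ≤ x)
    (hxn : x ≤ a + (n + 1) * ℓ) :
    x ∈ Set.Icc (a + (min n ⌊(x - a) / ℓ⌋₊ : ℕ) * ℓ)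
      (a + ((min n ⌊(x - a) / ℓ⌋₊ : ℕ) + 1) * ℓ) := by
  have hlow : (⌊(x - a) / ℓ⌋₊ : ℝ) * ℓ ≤ x - a :=
    (le_div_iff₀ hℓ).mp (Nat.floor_le (div_nonneg (sub_nonneg.mpr hax) hℓ.le))
  have hhigh : x - a < (⌊(x - a) / ℓ⌋₊ + 1) * ℓ := (div_lt_iff₀ hℓ).mp (Nat.lt_floor_add_one _)
  rcases le_total n ⌊(x - a) / ℓ⌋₊ with hn | hn
  · rw [min_eq_left hn]
    have : (n : ℝ) * ℓ ≤ ⌊(x - a) / ℓ⌋₊ * ℓ := by gcongr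
    constructor <;> linarith
  · rw [min_eq_right hn]
    constructor <;> linarith

lemma exists_measurable_approx_linearIndependent {a b : ℝ} (hab : a < b) {κ : Type*}
    [Fintype κ] {h : κ → ℝ} (hh : LinearIndependent ℤ h) {δ : ℝ} (hδ : 0 < δ) :
    ∃ (N : ℕ) (p : Fin N → Set.Icc a b) (c : Set.Icc a b → Fin N), Measurable c ∧
      (∀ x, dist (p (c x)) x ≤ δ) ∧
      LinearIndependent ℤ (fun ij : Fin N × κ => h ij.2 * p ij.1) := by
  obtain ⟨n, hn⟩ := exists_nat_gt ((b - a) / δ)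
  set ℓ := (b - a) / (n + 1)
  have hℓ : 0 < ℓ := div_pos (sub_pos.mpr hab) (by positivity)
  have hℓδ : ℓ ≤ δ := by
    rw [div_le_iff₀ (by positivity)]
    rw [div_lt_iff₀ hδ] at hn
    nlinarith
  have hb : a + (n + 1) * ℓ = b := by
    simp only [ℓ]; field_simp; ring
  obtain ⟨p, hp, hind⟩ := exists_mem_pi_Ioo_linearIndependent hh
    (u := fun i : Fin (n + 1) => a + i * ℓ) (v := fun i => a + (i + 1) * ℓ)
    (fun i => by linarith)
  have hpIcc (i : Fin (n + 1)) : p i ∈ Set.Icc a b := by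
    have hi : (i : ℝ) + 1 ≤ n + 1 := by exact_mod_cast Nat.succ_le_succ (Nat.lt_succ_iff.mp i.2)
    have : ((i : ℝ) + 1) * ℓ ≤ (n + 1) * ℓ := by gcongr
    constructor <;> nlinarith [(hp i).1, (hp i).2, (by positivity : (0 : ℝ) ≤ i * ℓ)]
  refine ⟨n + 1, fun i => ⟨p i, hpIcc i⟩,
    fun x => ⟨min n ⌊((x : ℝ) - a) / ℓ⌋₊, Nat.lt_succ_of_le (min_le_left _ _)⟩, ?_, fun x => ?_,
    hind⟩
  · exact (measurable_from_nat (f := fun k : ℕ => (⟨min n k, Nat.lt_succ_of_le (min_le_left _ _)⟩ :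
      Fin (n + 1)))).comp (Nat.measurable_floor.comp
        ((measurable_subtype_coe.sub_const a).div_const ℓ))
  · have hx := mem_Icc_min_floor hℓ n x.2.1 (by rw [hb]; exact x.2.2)
    have hpx := hp ⟨min n ⌊((x : ℝ) - a) / ℓ⌋₊, Nat.lt_succ_of_le (min_le_left _ _)⟩
    simp only at hpx
    rw [Subtype.dist_eq, Real.dist_eq, abs_le]
    constructor <;> linarith [hx.1, hx.2, hpx.1, hpx.2]

/-! ### The sets `A_{f,ε}` -/

lemma MeasureTheory.ProbabilityMeasure.isOpen_setOf_lintegral_lt {Ω : Type*} [TopologicalSpace Ω]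
    [MeasurableSpace Ω] [OpensMeasurableSpace Ω] (g : Ω →ᵇ ℝ≥0) (c : ℝ≥0∞) :
    IsOpen {σ : ProbabilityMeasure Ω | ∫⁻ x, g x ∂σ < c} := by
  convert (isOpen_Iio (a := c)).preimage
    (ENNReal.continuous_coe.comp (ProbabilityMeasure.continuous_testAgainstNN_eval g)) using 1
  ext σ
  simp

lemma eLpNorm_two_lt_ofReal_iff {α : Type*} [MeasurableSpace α] {μ : Measure α} {g : α → ℂ}
    {ε : ℝ} : eLpNorm g 2 μ < ENNReal.ofReal ε ↔ ∫⁻ x, ‖g x‖ₑ ^ 2 ∂μ < ENNReal.ofReal ε ^ 2 := by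
  have h2 := eLpNorm_nnreal_pow_eq_lintegral (f := g) (μ := μ) (p := 2) two_ne_zero
  simp only [NNReal.coe_ofNat, ENNReal.rpow_ofNat, ENNReal.coe_ofNat] at h2
  rw [← h2, ENNReal.pow_lt_pow_left_iff two_ne_zero]

lemma LinearIndependent.of_qIndep {n : ℕ} {h : Fin n → ℝ} (hinj : Function.Injective h)
    (hQ : QIndep (Set.range h)) : LinearIndependent ℤ h :=
  Fintype.linearIndependent_iff.mpr fun k hk =>
    hQ n h Set.mem_range_self hinj k (by simpa [zsmul_eq_mul] using hk)

lemma lintegral_smul_sum_map_measOn {X : Set ℝ} {ι : Type*} [Fintype ι] (c : ℝ≥0∞)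
    (h : ι → ℝ) (σ : ProbabilityMeasure X) {φ : ℝ → ℝ≥0∞} (hφ : Measurable φ) :
    ∫⁻ y, φ y ∂(c • ∑ j, (measOn σ).map (fun x => h j * x)) =
      ∫⁻ x, c * ∑ j, φ (h j * x) ∂(σ : Measure X) := by
  have hφj (j : ι) : Measurable fun x : X => φ (h j * x) := hφ.comp (by fun_prop)
  rw [lintegral_smul_measure, lintegral_finsetSum_measure, lintegral_const_mul _
    (Finset.measurable_sum _ fun j _ => hφj j), lintegral_finsetSum _ fun j _ => hφj j]
  congr 1
  refine Finset.sum_congr rfl fun j _ => ?_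
  rw [measOn, Measure.map_map (by fun_prop) measurable_subtype_coe,
    lintegral_map hφ (by fun_prop)]
  rfl

lemma ae_smul_sum_map_measOn_mem {X : Set ℝ} {ι : Type*} [Fintype ι] (c : ℝ≥0∞) (h : ι → ℝ)
    (σ : ProbabilityMeasure X) {K : Set ℝ} (hK : MeasurableSet K)
    (hmem : ∀ j, ∀ x ∈ X, h j * x ∈ K) :
    ∀ᵐ y ∂(c • ∑ j, (measOn σ).map (fun x => h j * x)), y ∈ K := by
  change K ∈ ae _
  rw [mem_ae_iff, ← lintegral_indicator_one hK.compl, lintegral_smul_sum_map_measOn c h σ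
    (measurable_one.indicator hK.compl)]
  simp [Set.indicator_of_notMem, hmem _ _ (Subtype.prop _)]

section Afe

variable {a b : ℝ} {m : ℕ} (h : Fin (m + 1) → ℝ)

noncomputable def meanSqDist (F : ℝ → ℂ) (t x : ℝ) : ℝ≥0 :=
  (m + 1 : ℝ≥0)⁻¹ * ∑ j, ‖F (h j * x) - xi t (h j * x)‖₊ ^ 2

lemma continuous_meanSqDist {F : ℝ → ℂ} (hF : Continuous F) (t : ℝ) :
    Continuous (meanSqDist h F t) := by
  have := continuous_xi t
  unfold meanSqDist
  fun_prop

lemma meanSqDist_le {F : ℝ → ℂ} {t x δ : ℝ}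
    (hle : ∀ j, ‖F (h j * x) - xi t (h j * x)‖ ≤ δ) : (meanSqDist h F t x : ℝ) ≤ δ ^ 2 := by
  simp only [meanSqDist, NNReal.coe_mul, NNReal.coe_inv, NNReal.coe_sum, NNReal.coe_pow,
    coe_nnnorm]
  push_cast
  calc _ ≤ ((m : ℝ) + 1)⁻¹ * ∑ _j : Fin (m + 1), δ ^ 2 := by gcongr with j; exact hle j
    _ = δ ^ 2 := by simp; field_simp

lemma isCompact_iUnion_mul_image_Icc : IsCompact (⋃ j, (fun x => h j * x) '' Set.Icc a b) :=
  isCompact_iUnion fun j => isCompact_Icc.image (continuous_const_mul (h j))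

variable {f F : ℝ → ℂ} (hF : Continuous F)
  (hfF : Set.EqOn f F (⋃ j, (fun x => h j * x) '' Set.Icc a b))
include hF hfF

lemma mem_Afe_iff {ε : ℝ} {σ : ProbabilityMeasure (Set.Icc a b)} :
    σ ∈ Afe a b m h f ε ↔
      ∃ t, ∫⁻ x, meanSqDist h F t x ∂(σ : Measure (Set.Icc a b)) < ENNReal.ofReal ε ^ 2 := by
  refine exists_congr fun t => ?_
  have hae := ae_smul_sum_map_measOn_mem ((m + 1 : ℝ≥0∞))⁻¹ h σ
    (isCompact_iUnion_mul_image_Icc h).isClosed.measurableSet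
    fun j x hx => Set.mem_iUnion.mpr ⟨j, x, hx, rfl⟩
  have hmeas : Measurable fun y => ‖F y - xi t y‖ₑ ^ 2 := by
    have := continuous_xi t
    fun_prop
  rw [eLpNorm_congr_ae (g := fun y => F y - xi t y) (hae.mono fun y hy => by simp only [hfF hy]),
    eLpNorm_two_lt_ofReal_iff, lintegral_smul_sum_map_measOn _ _ _ hmeas]
  simp [meanSqDist, ENNReal.coe_inv, enorm_eq_nnnorm]

lemma isOpen_Afe (ε : ℝ) : IsOpen (Afe a b m h f ε) := by
  have : CompactSpace (Set.Icc a b) := isCompact_iff_compactSpace.mp isCompact_Icc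
  have hAfe : Afe a b m h f ε = ⋃ t, {σ : ProbabilityMeasure (Set.Icc a b) |
      ∫⁻ x, BoundedContinuousFunction.mkOfCompact ⟨fun x : Set.Icc a b => meanSqDist h F t x,
        (continuous_meanSqDist h hF t).comp continuous_subtype_val⟩ x ∂σ <
          ENNReal.ofReal ε ^ 2} := by
    ext σ
    simp only [Set.mem_iUnion, mem_Afe_iff h hF hfF]
    rfl
  rw [hAfe]
  exact isOpen_iUnion fun t => ProbabilityMeasure.isOpen_setOf_lintegral_lt _ _

lemma dense_Afe (hab : a < b) (hh : LinearIndependent ℤ h)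
    (hf1 : ∀ x ∈ ⋃ j, (fun x => h j * x) '' Set.Icc a b, ‖f x‖ = 1) {ε : ℝ} (hε : 0 < ε) :
    Dense (Afe a b m h f ε) := by
  intro σ
  choose N p c hc hdist hind using fun n : ℕ =>
    exists_measurable_approx_linearIndependent hab hh (Nat.one_div_pos_of_nat (n := n))
  have hq (n : ℕ) : Measurable (p n ∘ c n) := measurable_from_top.comp (hc n)
  refine mem_closure_of_tendsto (σ.tendsto_map_of_tendsto (L := atTop) hq fun x => ?_)
    (.of_forall fun n => ?_)
  · exact tendsto_iff_dist_tendsto_zero.mpr (squeeze_zero (fun _ => dist_nonneg)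
      (fun n => hdist n x) tendsto_one_div_add_atTop_nhds_zero_nat)
  have hK (i : Fin (N n)) (j : Fin (m + 1)) :
      h j * p n i ∈ ⋃ j, (fun x => h j * x) '' Set.Icc a b :=
    Set.mem_iUnion.mpr ⟨j, p n i, (p n i).2, rfl⟩
  obtain ⟨t, ht⟩ := exists_forall_norm_xi_sub_lt (hind n)
    (z := fun ij => f (h ij.2 * p n ij.1)) (fun ij => hf1 _ (hK ij.1 ij.2)) (half_pos hε)
  have hbound (x : Set.Icc a b) :
      (meanSqDist h F t (p n (c n x)) : ℝ≥0∞) ≤ ENNReal.ofReal ((ε / 2) ^ 2) := by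
    rw [← ENNReal.ofReal_coe_nnreal]
    refine ENNReal.ofReal_le_ofReal (meanSqDist_le h fun j => ?_)
    rw [← hfF (hK _ _), norm_sub_rev]
    exact (ht (c n x, j)).le
  refine (mem_Afe_iff h hF hfF).mpr ⟨t, ?_⟩
  rw [ProbabilityMeasure.toMeasure_map]
  calc ∫⁻ x, meanSqDist h F t x ∂(σ : Measure (Set.Icc a b)).map (p n ∘ c n)
      ≤ ∫⁻ x, meanSqDist h F t (p n (c n x)) ∂σ := lintegral_map_le _ _
    _ ≤ ∫⁻ _, ENNReal.ofReal ((ε / 2) ^ 2) ∂(σ : Measure (Set.Icc a b)) := lintegral_mono hbound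
    _ = ENNReal.ofReal ((ε / 2) ^ 2) := by simp
    _ < ENNReal.ofReal ε ^ 2 := by
      rw [← ENNReal.ofReal_pow hε.le, ENNReal.ofReal_lt_ofReal_iff (by positivity)]
      nlinarith

end Afe

theorem statement0_general (a b : ℝ) (hab : a < b) (m : ℕ) (h : Fin (m + 1) → ℝ)
    (hinj : Function.Injective h) (hQ : QIndep (Set.range h))
    (f : ℝ → ℂ)
    (hfc : ContinuousOn f (⋃ j, (fun x => h j * x) '' Set.Icc a b))
    (hf1 : ∀ x ∈ ⋃ j, (fun x => h j * x) '' Set.Icc a b, ‖f x‖ = 1)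
    (ε : ℝ) (hε : 0 < ε) :
    IsOpen (Afe a b m h f ε) ∧ Dense (Afe a b m h f ε) := by
  obtain ⟨F, hF⟩ := ContinuousMap.exists_restrict_eq (isCompact_iUnion_mul_image_Icc h).isClosed
    ⟨_, hfc.domRestrict⟩
  have hfF : Set.EqOn f F (⋃ j, (fun x => h j * x) '' Set.Icc a b) := fun y hy =>
    (ContinuousMap.congr_fun hF ⟨y, hy⟩).symm
  exact ⟨isOpen_Afe h F.continuous hfF ε,
    dense_Afe h F.continuous hfF hab (.of_qIndep hinj hQ) hf1 hε⟩

theorem statement0 (a b : ℝ) (hab : a < b) (m : ℕ) (h : Fin (m + 1) → ℝ)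
    (hne : ∀ j, h j ≠ 0) (hinj : Function.Injective h) (hQ : QIndep (Set.range h))
    (f : ℝ → ℂ)
    (hfc : ContinuousOn f (⋃ j, (fun x => h j * x) '' Set.Icc a b))
    (hf1 : ∀ x ∈ ⋃ j, (fun x => h j * x) '' Set.Icc a b, ‖f x‖ = 1)
    (ε : ℝ) (hε : 0 < ε) :
    IsOpen (Afe a b m h f ε) ∧ Dense (Afe a b m h f ε) :=
  statement0_general a b hab m h hinj hQ f hfc hf1 ε hε
end

section
/- Let (X, 𝓑) be a standard Borel space and let φ : X → X be a measurable map. Let σ be a finite positive continuous Borel measure on X such that the map φ : (X, σ) → (X, φ_*σ) is almost everywhere invertible (i.e., there is a measurable map ψ : X → X with ψ(φ(x)) = x for σ-a.e. x). Assume that σ({x ∈ X : φ(x) = x}) = 0 and that the measures σ and φ_*σ are not mutually singular. Then there exists a measurable set A ∈ 𝓑 such that σ(A) > 0, σ(A ∩ φ⁻¹A) = 0, and the measures σ and φ_*σ restricted to A are equivalent (mutually absolutely continuous). -/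
/-!
Put `ν = σ.map φ` and `λ = σ + ν`. On the set `E` where both densities `dσ/dλ` and `dν/dλ` are
nonzero, `σ` and `ν` are equivalent, and `σ E ≠ 0` since otherwise `σ ⟂ₘ ν`. A countable measurable
family separates the points of `X`, so every point moved by `φ` lies in some member `T` of the
family while its image does not. As `σ`-almost every point of `E` is moved, some
`A = E ∩ (T \ φ⁻¹' T)` has positive measure, and `A` is disjoint from `φ⁻¹' A ⊆ φ⁻¹' T`.
-/

open MeasureTheory Set

section

variable {X : Type*} [MeasurableSpace X]

namespace MeasureTheory.Measure

lemma restrict_rnDeriv_ne_zero_absolutelyContinuous {μ ν : Measure X}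
    [μ.HaveLebesgueDecomposition ν] (hμν : μ ≪ ν) :
    ν.restrict {x | μ.rnDeriv ν x ≠ 0} ≪ μ := by
  set S := {x | μ.rnDeriv ν x ≠ 0}
  have hS : MeasurableSet S := (measurable_rnDeriv μ ν (measurableSet_singleton 0)).compl
  have hwd : ν.restrict S ≪ (ν.restrict S).withDensity (μ.rnDeriv ν) :=
    withDensity_absolutelyContinuous' (measurable_rnDeriv μ ν).aemeasurable
      ((ae_restrict_mem hS).mono fun _ hx ↦ hx)
  rw [← restrict_withDensity hS, withDensity_rnDeriv_eq μ ν hμν] at hwd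
  exact hwd.trans (absolutelyContinuous_of_le restrict_le_self)

lemma exists_restrict_equiv_of_not_mutuallySingular {μ ν : Measure X} [SigmaFinite μ]
    [SigmaFinite ν] (h : ¬ μ ⟂ₘ ν) :
    ∃ E, MeasurableSet E ∧ μ E ≠ 0 ∧
      μ.restrict E ≪ ν.restrict E ∧ ν.restrict E ≪ μ.restrict E := by
  have hμ : μ ≪ μ + ν := AbsolutelyContinuous.rfl.add_right ν
  have hν : ν ≪ μ + ν := AbsolutelyContinuous.rfl.add_right' μ
  set F := {x | μ.rnDeriv (μ + ν) x ≠ 0}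
  set G := {x | ν.rnDeriv (μ + ν) x ≠ 0}
  have hF : MeasurableSet F :=
    (measurable_rnDeriv μ (μ + ν) (measurableSet_singleton 0)).compl
  have hG : MeasurableSet G :=
    (measurable_rnDeriv ν (μ + ν) (measurableSet_singleton 0)).compl
  have hμF : μ Fᶜ = 0 := mem_ae_iff.1 ((rnDeriv_pos hμ).mono fun _ hx ↦ hx.ne')
  have hνG : ν Gᶜ = 0 := mem_ae_iff.1 ((rnDeriv_pos hν).mono fun _ hx ↦ hx.ne')
  refine ⟨F ∩ G, hF.inter hG, fun h0 ↦ h ⟨Fᶜ ∪ F ∩ G, hF.compl.union (hF.inter hG),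
    measure_union_null hμF h0, measure_mono_null (fun x hx ↦ ?_) hνG⟩, ?_, ?_⟩
  · simp only [compl_union, compl_compl, mem_inter_iff, mem_compl_iff] at hx ⊢
    tauto
  · have hGν := (restrict_rnDeriv_ne_zero_absolutelyContinuous hν).restrict (F ∩ G)
    rw [restrict_restrict_of_subset inter_subset_right] at hGν
    exact (hμ.restrict _).trans hGν
  · have hFμ := (restrict_rnDeriv_ne_zero_absolutelyContinuous hμ).restrict (F ∩ G)
    rw [restrict_restrict_of_subset inter_subset_left] at hFμ
    exact (hν.restrict _).trans hFμ

end MeasureTheory.Measure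

lemma MeasurableSpace.exists_countable_measurableSet_mem_notMem [CountablySeparated X] :
    ∃ 𝒯 : Set (Set X), 𝒯.Countable ∧ (∀ T ∈ 𝒯, MeasurableSet T) ∧
      ∀ x y, x ≠ y → ∃ T ∈ 𝒯, x ∈ T ∧ y ∉ T := by
  obtain ⟨S, hSc, hSm, hSsep⟩ := exists_countable_separating X MeasurableSet univ
  refine ⟨S ∪ compl '' S, hSc.union (hSc.image _), ?_, fun x y hxy ↦ ?_⟩
  · rintro T (hT | ⟨s, hs, rfl⟩)
    exacts [hSm T hT, (hSm s hs).compl]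
  · obtain ⟨s, hs, hxy⟩ : ∃ s ∈ S, ¬ (x ∈ s ↔ y ∈ s) := by
      by_contra! h
      exact hxy (hSsep x trivial y trivial h)
    by_cases hx : x ∈ s
    · exact ⟨s, Or.inl hs, hx, fun hy ↦ hxy ⟨fun _ ↦ hy, fun _ ↦ hx⟩⟩
    · exact ⟨sᶜ, Or.inr ⟨s, hs, rfl⟩, hx, fun hy ↦ hxy ⟨fun h ↦ (hx h).elim,
        fun h ↦ (hy h).elim⟩⟩

lemma exists_subset_disjoint_preimage_of_measure_fixedPoints_eq_zero
    [MeasurableSpace.CountablySeparated X] {φ : X → X} (hφ : Measurable φ) {μ : Measure X}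
    (hfix : μ {x | φ x = x} = 0) {E : Set X} (hE : MeasurableSet E) (hμE : μ E ≠ 0) :
    ∃ A ⊆ E, MeasurableSet A ∧ μ A ≠ 0 ∧ Disjoint A (φ ⁻¹' A) := by
  obtain ⟨𝒯, h𝒯c, h𝒯m, h𝒯sep⟩ :=
    MeasurableSpace.exists_countable_measurableSet_mem_notMem (X := X)
  have hcover : E \ {x | φ x = x} ⊆ ⋃ T ∈ 𝒯, E ∩ (T \ φ ⁻¹' T) := fun x ⟨hxE, hx⟩ ↦ by
    obtain ⟨T, hT, hxT, hφxT⟩ := h𝒯sep x (φ x) (Ne.symm hx)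
    exact mem_biUnion hT ⟨hxE, hxT, hφxT⟩
  obtain ⟨T, hT, hμT⟩ : ∃ T ∈ 𝒯, μ (E ∩ (T \ φ ⁻¹' T)) ≠ 0 := by
    by_contra! h
    exact hμE (measure_sdiff_null hfix ▸
      measure_mono_null hcover ((measure_biUnion_null_iff h𝒯c).2 h))
  refine ⟨E ∩ (T \ φ ⁻¹' T), inter_subset_left,
    hE.inter ((h𝒯m T hT).diff (hφ (h𝒯m T hT))), hμT, ?_⟩
  exact disjoint_left.2 fun x hxA hxφA ↦ hxA.2.2 hxφA.2.1

end

theorem statement3_general {X : Type*} [MeasurableSpace X] [StandardBorelSpace X]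
    (φ : X → X) (hφ : Measurable φ)
    (σ : Measure X) [IsFiniteMeasure σ]
    (hfix : σ {x | φ x = x} = 0)
    (hns : ¬ σ ⟂ₘ σ.map φ) :
    ∃ A : Set X, MeasurableSet A ∧ 0 < σ A ∧ σ (A ∩ φ ⁻¹' A) = 0 ∧
      σ.restrict A ≪ (σ.map φ).restrict A ∧ (σ.map φ).restrict A ≪ σ.restrict A := by
  obtain ⟨E, hE, hσE, hσν, hνσ⟩ :=
    Measure.exists_restrict_equiv_of_not_mutuallySingular hns
  obtain ⟨A, hAE, hA, hσA, hdisj⟩ :=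
    exists_subset_disjoint_preimage_of_measure_fixedPoints_eq_zero hφ hfix hE hσE
  refine ⟨A, hA, pos_iff_ne_zero.2 hσA, by rw [hdisj.inter_eq, measure_empty], ?_, ?_⟩
  · simpa only [Measure.restrict_restrict_of_subset hAE] using hσν.restrict A
  · simpa only [Measure.restrict_restrict_of_subset hAE] using hνσ.restrict A

theorem statement3 {X : Type*} [MeasurableSpace X] [StandardBorelSpace X]
    (φ : X → X) (hφ : Measurable φ)
    (σ : Measure X) [IsFiniteMeasure σ] (hσpos : σ ≠ 0)
    (hcont : ∀ x, σ {x} = 0)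
    (hinv : ∃ ψ : X → X, Measurable ψ ∧ ∀ᵐ x ∂σ, ψ (φ x) = x)
    (hfix : σ {x | φ x = x} = 0)
    (hns : ¬ σ ⟂ₘ σ.map φ) :
    ∃ A : Set X, MeasurableSet A ∧ 0 < σ A ∧ σ (A ∩ φ ⁻¹' A) = 0 ∧
      σ.restrict A ≪ (σ.map φ).restrict A ∧ (σ.map φ).restrict A ≪ σ.restrict A :=
  statement3_general φ hφ σ hfix hns
end

section
/- Let A ⊂ ℝ⁺∖{0} be a Borel set which is additively ℚ-independent, and let σ be a nonzero finite positive continuous Borel measure on ℝ concentrated on A (i.e. σ(ℝ∖A) = 0). Let H ⊂ ℝ⁺∖{0} be a multiplicative subgroup such that σ_h is equivalent to σ for every h ∈ H. Then H is an additively ℚ-independent set. -/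
/-! Given `h₁, …, hₘ ∈ H`, quasi-invariance of `σ` under each `x ↦ hᵢ x` makes `σ`-almost every `x`
satisfy `x ∈ A` and `hᵢ x ∈ A` for all `i`. Such an `x` is positive, so the points `hᵢ x` are distinct
elements of `A`, and an integer relation `∑ kᵢ hᵢ = 0` becomes the relation `∑ kᵢ (hᵢ x) = 0` in `A`. -/

open MeasureTheory Filter

theorem QIndep.eq_zero_of_mul_mem {A : Set ℝ} (hA : QIndep A) {m : ℕ} {a : Fin m → ℝ}
    (ha : Function.Injective a) {x : ℝ} (hx : x ≠ 0) (hax : ∀ i, a i * x ∈ A)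
    {k : Fin m → ℤ} (hk : ∑ i, (k i : ℝ) * a i = 0) : ∀ i, k i = 0 :=
  hA m (fun i => a i * x) hax ((mul_left_injective₀ hx).comp ha) k <| by
    simp only [← mul_assoc, ← Finset.sum_mul, hk, zero_mul]

theorem MeasureTheory.Measure.exists_mem_forall_mem_of_quasiMeasurePreserving
    {α ι : Type*} [MeasurableSpace α] [Countable ι] {μ : Measure α} (hμ : μ ≠ 0)
    {A : Set α} (hA : μ Aᶜ = 0) {f : ι → α → α}
    (hf : ∀ i, Measure.QuasiMeasurePreserving (f i) μ μ) :
    ∃ x ∈ A, ∀ i, f i x ∈ A := by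
  have hAae : ∀ᵐ x ∂μ, x ∈ A := hA
  have : NeBot (ae μ) := ae_neBot.2 hμ
  exact (hAae.and (ae_all_iff.2 fun i => (hf i).ae hAae)).exists

theorem statement9_general (A : Set ℝ) (hA : A ⊆ Set.Ioi (0 : ℝ))
    (hAQ : QIndep A)
    (σ : Measure ℝ) (hσpos : σ ≠ 0)
    (hconc : σ Aᶜ = 0)
    (H : Set ℝ)
    (hequiv : ∀ h ∈ H, σ.map (fun x => h * x) ≪ σ ∧ σ ≪ σ.map (fun x => h * x)) :
    QIndep H := by
  intro m a haH ha k hk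
  have hqmp : ∀ i, Measure.QuasiMeasurePreserving (fun x => a i * x) σ σ := fun i =>
    ⟨measurable_const_mul (a i), (hequiv (a i) (haH i)).1⟩
  obtain ⟨x, hxA, haxA⟩ := σ.exists_mem_forall_mem_of_quasiMeasurePreserving hσpos hconc hqmp
  exact hAQ.eq_zero_of_mul_mem ha (hA hxA).ne' haxA hk

theorem statement9 (A : Set ℝ) (hAm : MeasurableSet A) (hA : A ⊆ Set.Ioi (0 : ℝ))
    (hAQ : QIndep A)
    (σ : Measure ℝ) [IsFiniteMeasure σ] (hσpos : σ ≠ 0) (hcont : ∀ x, σ {x} = 0)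
    (hconc : σ Aᶜ = 0)
    (H : Set ℝ) (hH : H ⊆ Set.Ioi (0 : ℝ)) (hone : (1 : ℝ) ∈ H)
    (hmul : ∀ x ∈ H, ∀ y ∈ H, x * y ∈ H) (hinv : ∀ x ∈ H, x⁻¹ ∈ H)
    (hequiv : ∀ h ∈ H, σ.map (fun x => h * x) ≪ σ ∧ σ ≪ σ.map (fun x => h * x)) :
    QIndep H :=
  statement9_general A hA hAQ σ hσpos hconc H hequiv
end

section
/- Let a < b be real numbers, let {h_0, h_1, …, h_m} ⊂ ℝ∖{0} be an additively ℚ-independent set, let y_1, …, y_N ∈ [a,b], and let δ > 0. Then there exist x_1, …, x_N ∈ [a,b] with |x_s − y_s| < δ for s = 1, …, N such that the set L = { h_j x_s : 0 ≤ j ≤ m, 1 ≤ s ≤ N } consists of (m+1)N distinct elements and is additively ℚ-independent. -/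
/-!
For a nonzero integer vector `k`, the relation `∑ k (j, s) * h j * x s = 0` is a linear equation
in `x ∈ ℝᴺ` whose coefficient of `x s` is `∑ j, k (j, s) * h j`; independence of the `h j` makes
one of these coefficients nonzero, so the relation cuts out a proper hyperplane, a null set.
There are countably many `k`, hence almost every `x` gives an independent family, and such an `x`
can be found in the nonempty open set of admissible perturbations of `y`.
-/

open MeasureTheory Filter Topology
open scoped ENNReal NNReal

theorem LinearIndependent.qIndep_range {ι : Type*} {v : ι → ℝ} (hv : LinearIndependent ℤ v) :
    QIndep (Set.range v) := by
  intro m a ha ha_inj k hk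
  choose e he using ha
  have hva : v ∘ e = a := funext he
  have hli : LinearIndependent ℤ a := hva ▸ hv.comp e (hva.symm ▸ ha_inj).of_comp
  exact Fintype.linearIndependent_iff.mp hli k (by simpa [zsmul_eq_mul] using hk)

theorem QIndep.linearIndependent {n : ℕ} {v : Fin n → ℝ} (hv : QIndep (Set.range v))
    (hv_inj : Function.Injective v) : LinearIndependent ℤ v :=
  Fintype.linearIndependent_iff.mpr fun k hk =>
    hv n v (fun i => ⟨i, rfl⟩) hv_inj k (by simpa [zsmul_eq_mul] using hk)

theorem LinearMap.ae_apply_ne_zero {E : Type*} [NormedAddCommGroup E] [NormedSpace ℝ E]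
    [MeasurableSpace E] [BorelSpace E] [FiniteDimensional ℝ E] (μ : Measure E)
    [μ.IsAddHaarMeasure] {ℓ : E →ₗ[ℝ] ℝ} (hℓ : ℓ ≠ 0) : ∀ᵐ x ∂μ, ℓ x ≠ 0 :=
  ae_iff.mpr <| measure_mono_null (fun x hx => by simpa using hx)
    (Measure.addHaar_submodule μ _ (mt LinearMap.ker_eq_top.mp hℓ))

theorem LinearIndependent.ae_linearIndependent_mul {ι κ : Type*} [Fintype ι] [Fintype κ]
    {v : ι → ℝ} (hv : LinearIndependent ℤ v) (μ : Measure (κ → ℝ)) [μ.IsAddHaarMeasure] :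
    ∀ᵐ x ∂μ, LinearIndependent ℤ fun p : ι × κ => v p.1 * x p.2 := by
  simp only [Fintype.linearIndependent_iff]
  refine ae_all_iff.mpr fun g => ?_
  by_cases hg : g = 0
  · exact Eventually.of_forall fun _ _ => by simp [hg]
  set c : κ → ℝ := fun s => ∑ j, g (j, s) • v j
  have hc : c ≠ 0 := by
    refine fun hc => hg (funext fun p => ?_)
    exact Fintype.linearIndependent_iff.mp hv (fun j => g (j, p.2)) (congrFun hc p.2) p.1
  obtain ⟨s, hs⟩ := Function.ne_iff.mp hc
  classical
  have hℓ : Fintype.linearCombination ℝ c ≠ 0 := fun h0 => hs <| by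
    simpa using congr($h0 (Pi.single s 1))
  filter_upwards [LinearMap.ae_apply_ne_zero μ hℓ] with x hx hsum
  have hregroup : ∑ p : ι × κ, g p • (v p.1 * x p.2) = Fintype.linearCombination ℝ c x := by
    rw [Fintype.linearCombination_apply, Fintype.sum_prod_type, Finset.sum_comm]
    simp only [c, zsmul_eq_mul, smul_eq_mul, Finset.mul_sum]
    exact Finset.sum_congr rfl fun s _ => Finset.sum_congr rfl fun j _ => by ring
  exact absurd (hregroup ▸ hsum) hx

theorem statement11_general (a b : ℝ) (hab : a < b) (m : ℕ) (h : Fin (m + 1) → ℝ)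
    (hinj : Function.Injective h) (hQ : QIndep (Set.range h))
    (N : ℕ) (y : Fin N → ℝ) (hy : ∀ s, y s ∈ Set.Icc a b) (δ : ℝ) (hδ : 0 < δ) :
    ∃ x : Fin N → ℝ, (∀ s, x s ∈ Set.Icc a b) ∧ (∀ s, |x s - y s| < δ) ∧
      Function.Injective (fun p : Fin (m + 1) × Fin N => h p.1 * x p.2) ∧
      QIndep {z : ℝ | ∃ j s, z = h j * x s} := by
  set V : Set (Fin N → ℝ) := Set.univ.pi fun _ => Set.Ioo a b
  have hyV : y ∈ closure V := by
    rw [closure_pi_set, closure_Ioo hab.ne]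
    exact fun s _ => hy s
  have hU : IsOpen (Metric.ball y δ ∩ V) :=
    Metric.isOpen_ball.inter (isOpen_set_pi Set.finite_univ fun _ _ => isOpen_Ioo)
  have hdense := Measure.dense_of_ae <|
    (hQ.linearIndependent hinj).ae_linearIndependent_mul (volume : Measure (Fin N → ℝ))
  obtain ⟨x, ⟨hxy, hxV⟩, hx⟩ := hdense.inter_open_nonempty _ hU
    (mem_closure_iff.mp hyV _ Metric.isOpen_ball (Metric.mem_ball_self hδ))
  refine ⟨x, fun s => Set.Ioo_subset_Icc_self (hxV s trivial), fun s => ?_, hx.injective, ?_⟩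
  · rw [← Real.dist_eq]
    exact (dist_le_pi_dist x y s).trans_lt hxy
  · convert hx.qIndep_range using 1
    ext z
    simp [eq_comm]

theorem statement11 (a b : ℝ) (hab : a < b) (m : ℕ) (h : Fin (m + 1) → ℝ)
    (hne : ∀ j, h j ≠ 0) (hinj : Function.Injective h) (hQ : QIndep (Set.range h))
    (N : ℕ) (y : Fin N → ℝ) (hy : ∀ s, y s ∈ Set.Icc a b) (δ : ℝ) (hδ : 0 < δ) :
    ∃ x : Fin N → ℝ, (∀ s, x s ∈ Set.Icc a b) ∧ (∀ s, |x s - y s| < δ) ∧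
      Function.Injective (fun p : Fin (m + 1) × Fin N => h p.1 * x p.2) ∧
      QIndep {z : ℝ | ∃ j s, z = h j * x s} :=
  statement11_general a b hab m h hinj hQ N y hy δ hδ
end

section
/- Let [a,b] ⊂ ℝ be a nontrivial compact interval. Then: (i) the set P_c^{[a,b]}(ℝ) = { ν ∈ P_c(ℝ) : ν([a,b]) > 0 } is open and dense in P_c(ℝ); (ii) the map Δ : P_c^{[a,b]}(ℝ) → P_c([a,b]) sending ν to the conditional probability measure ν(· | [a,b]) = ν(· ∩ [a,b]) / ν([a,b]) is continuous; (iii) the Δ-preimage of any dense subset of P_c([a,b]) is dense in P_c^{[a,b]}(ℝ); consequently the Δ-preimage of any G_δ dense subset of P_c([a,b]) is G_δ dense in P_c^{[a,b]}(ℝ). -/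
open MeasureTheory Filter Topology
open scoped ENNReal NNReal

/-- `P_c(ℝ)`: the continuous (atomless) Borel probability measures on `ℝ`,
with the weak topology. -/
abbrev PcR : Type := {ν : ProbabilityMeasure ℝ // ∀ x : ℝ, ν.toMeasure {x} = 0}

/-- `P_c([a,b])`: the continuous Borel probability measures on `[a,b]`,
with the weak topology. -/
abbrev PcIcc (a b : ℝ) : Type :=
  {σ : ProbabilityMeasure (Set.Icc a b) // ∀ x, σ.toMeasure {x} = 0}

/-- `P_c^{[a,b]}(ℝ)`: members of `P_c(ℝ)` giving positive mass to `[a,b]`. -/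
def PcIccPos (a b : ℝ) : Set PcR := {ν | 0 < ν.1.toMeasure (Set.Icc a b)}

/-!
A measure `ν ∈ P_c(ℝ)` has no atoms, so `ν [a, b] = ν (a, b)` and `ν (∂[a, b]) = 0`. The first
identity exhibits `P_c^{[a,b]}(ℝ)` as the preimage of `{μ | μ (a, b) > 0}`, which is open by the
portmanteau theorem, and mixing `ν` with a small multiple of the uniform law on `[a, b]` shows
density. The second identity makes conditioning on `[a, b]` continuous at `ν`, again by the
portmanteau theorem. Finally, `ρ ↦ ν|_{[a,b]ᶜ} + ν [a, b] • ρ` is a continuous section of `Δ`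
passing through `ν`, so `Δ`-preimages of dense sets are dense, while preimages of `G_δ` sets under
the continuous map `Δ` are `G_δ`.
-/

open Set ProbabilityTheory TopologicalSpace

namespace MeasureTheory.ProbabilityMeasure

section Measurable

variable {Ω : Type*} [MeasurableSpace Ω]

open unitInterval in
noncomputable def mix (p : I) (μ ν : ProbabilityMeasure Ω) : ProbabilityMeasure Ω :=
  ⟨toNNReal p • (μ : Measure Ω) + toNNReal (σ p) • (ν : Measure Ω), inferInstance⟩

@[simp]
lemma mix_zero (μ ν : ProbabilityMeasure Ω) : mix 0 μ ν = ν := by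
  ext1; simp [mix]

noncomputable def cond (μ : ProbabilityMeasure Ω) {s : Set Ω} (hs : (μ : Measure Ω) s ≠ 0) :
    ProbabilityMeasure Ω :=
  ⟨(μ : Measure Ω)[|s], cond_isProbabilityMeasure hs⟩

@[simp]
lemma toMeasure_cond (μ : ProbabilityMeasure Ω) {s : Set Ω} (hs : (μ : Measure Ω) s ≠ 0) :
    (μ.cond hs : Measure Ω) = (μ : Measure Ω)[|s] := rfl

end Measurable

variable {Ω : Type*} [MeasurableSpace Ω] [TopologicalSpace Ω] [OpensMeasurableSpace Ω]

lemma isOpen_setOf_pos_apply [HasOuterApproxClosed Ω] {G : Set Ω} (hG : IsOpen G) :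
    IsOpen {μ : ProbabilityMeasure Ω | 0 < (μ : Measure Ω) G} :=
  (lowerSemicontinuous_iff_le_liminf.2 fun _ ↦
    le_liminf_measure_open_of_tendsto tendsto_id hG).isOpen_preimage 0

open unitInterval in
lemma continuous_mix (μ ν : ProbabilityMeasure Ω) : Continuous fun p : I ↦ mix p μ ν := by
  rw [(toFiniteMeasure_isEmbedding Ω).continuous_iff]
  change Continuous fun p : I ↦ toNNReal p • μ.toFiniteMeasure + toNNReal (σ p) • ν.toFiniteMeasure
  fun_prop

/-- It suffices to test convergence on the π-system of sets with `μ`-null frontier; on such a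
set `t`, the portmanteau theorem applies to both `s ∩ t` and `s`. -/
theorem tendsto_cond [SecondCountableTopology Ω] [PseudoMetrizableSpace Ω]
    {ι : Type*} {L : Filter ι} [L.IsCountablyGenerated] {μs : ι → ProbabilityMeasure Ω}
    {μ : ProbabilityMeasure Ω} (hμs : Tendsto μs L (𝓝 μ)) {s : Set Ω}
    (hs : ∀ i, (μs i : Measure Ω) s ≠ 0) (hμ : (μ : Measure Ω) s ≠ 0)
    (hfr : (μ : Measure Ω) (frontier s) = 0) :
    Tendsto (fun i ↦ (μs i).cond (hs i)) L (𝓝 (μ.cond hμ)) := by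
  let S : Set (Set Ω) := {t | MeasurableSet t ∧ (μ : Measure Ω) (frontier t) = 0}
  have hS : IsPiSystem S := fun t ht t' ht' _ ↦
    ⟨ht.1.inter ht'.1, null_frontier_inter ht.2 ht'.2⟩
  refine hS.tendsto_probabilityMeasure_of_tendsto_of_mem (fun t ht ↦ ht.1) ?_ ?_
  · let := pseudoMetrizableSpacePseudoMetric Ω
    intro u hu x hx
    obtain ⟨ε, hε, hεu⟩ := Metric.isOpen_iff.1 hu x hx
    obtain ⟨r, hr, hr_null⟩ := exists_null_frontier_thickening (μ : Measure Ω) {x} hε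
    rw [Metric.thickening_singleton] at hr_null
    exact ⟨Metric.ball x r, ⟨measurableSet_ball, hr_null⟩, Metric.ball_mem_nhds x hr.1,
      (Metric.ball_subset_ball hr.2.le).trans hεu⟩
  · intro t ht
    rw [← ENNReal.tendsto_coe]
    simp only [ennreal_coeFn_eq_coeFn_toMeasure, toMeasure_cond, cond_apply' ht.1,
      ← ENNReal.div_eq_inv_mul]
    exact ENNReal.Tendsto.div
      (tendsto_measure_of_null_frontier_of_tendsto' hμs (null_frontier_inter hfr ht.2))
      (Or.inr hμ) (tendsto_measure_of_null_frontier_of_tendsto' hμs hfr)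
      (Or.inl (measure_ne_top _ _))

end MeasureTheory.ProbabilityMeasure

namespace MeasureTheory.Measure

variable {Ω : Type*} [MeasurableSpace Ω] {μ : Measure Ω} {s : Set Ω}

lemma restrict_compl_add_smul_map_apply_self (hs : MeasurableSet s) (c : ℝ≥0∞)
    (ρ : Measure s) [IsProbabilityMeasure ρ] : (μ.restrict sᶜ + c • ρ.map ((↑) : s → Ω)) s = c := by
  simp [restrict_apply hs, map_apply measurable_subtype_coe hs]

lemma isProbabilityMeasure_restrict_compl_add_smul_map [IsProbabilityMeasure μ]
    (hs : MeasurableSet s) (ρ : Measure s) [IsProbabilityMeasure ρ] :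
    IsProbabilityMeasure (μ.restrict sᶜ + μ s • ρ.map ((↑) : s → Ω)) :=
  ⟨by simp [map_apply measurable_subtype_coe, add_comm, prob_add_prob_compl hs]⟩

lemma restrict_compl_add_smul_map_singleton [MeasurableSingletonClass Ω] [NullSingletonClass μ]
    (c : ℝ≥0∞) (ρ : Measure s) [NullSingletonClass ρ] (x : Ω) :
    (μ.restrict sᶜ + c • ρ.map ((↑) : s → Ω)) {x} = 0 := by
  simp [map_apply measurable_subtype_coe (measurableSet_singleton x),
    (subsingleton_singleton.preimage Subtype.val_injective).measure_zero]

lemma comap_cond_restrict_compl_add_smul_map (hs : MeasurableSet s) (hμs : μ s ≠ 0)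
    (hμs' : μ s ≠ ∞) (ρ : Measure s) [IsProbabilityMeasure ρ] :
    comap (↑) (μ.restrict sᶜ + μ s • ρ.map (↑))[|s] = ρ := by
  have hmap : (ρ.map ((↑) : s → Ω)).restrict s = ρ.map (↑) :=
    restrict_eq_self_of_ae_mem ((ae_map_iff measurable_subtype_coe.aemeasurable hs).2
      (ae_of_all _ Subtype.prop))
  rw [ProbabilityTheory.cond, restrict_compl_add_smul_map_apply_self hs, restrict_add,
    restrict_restrict hs, inter_compl_self, restrict_empty, zero_add, restrict_smul, hmap,
    smul_smul, ENNReal.inv_mul_cancel hμs hμs', one_smul,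
    (MeasurableEmbedding.subtype_coe hs).comap_map]

lemma restrict_compl_add_smul_map_comap_cond (hs : MeasurableSet s) (hμs : μ s ≠ 0)
    (hμs' : μ s ≠ ∞) :
    μ.restrict sᶜ + μ s • (comap (↑) μ[|s]).map ((↑) : s → Ω) = μ := by
  rw [map_comap_subtype_coe hs, restrict_eq_self_of_ae_mem (ae_cond_mem hs),
    ProbabilityTheory.cond, smul_smul, ENNReal.mul_inv_cancel hμs hμs', one_smul,
    restrict_compl_add_restrict hs]

end MeasureTheory.Measure

lemma Dense.preimage_of_forall_exists_section {X Y : Type*} [TopologicalSpace X]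
    [TopologicalSpace Y] {f : X → Y} {A : Set Y} (hA : Dense A)
    (hf : ∀ x, ∃ g : Y → X, Continuous g ∧ Function.LeftInverse f g ∧ g (f x) = x) :
    Dense (f ⁻¹' A) := by
  intro x
  obtain ⟨g, hg, hfg, hx⟩ := hf x
  rw [← hx]
  exact map_mem_closure hg (hA (f x)) fun y hy ↦ by simpa [mem_preimage, hfg y] using hy

lemma PcR.nullSingletonClass (ν : PcR) : NullSingletonClass (ν.1 : Measure ℝ) := ⟨ν.2⟩

variable {a b : ℝ}

lemma PcR.measure_Icc_eq_Ioo (ν : PcR) :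
    (ν.1 : Measure ℝ) (Icc a b) = (ν.1 : Measure ℝ) (Ioo a b) :=
  have := ν.nullSingletonClass
  (measure_congr Ioo_ae_eq_Icc).symm

lemma PcR.measure_frontier_Icc (ν : PcR) : (ν.1 : Measure ℝ) (frontier (Icc a b)) = 0 := by
  have := ν.nullSingletonClass
  rw [frontier, closure_Icc, interior_Icc]
  exact (ae_eq_set.1 Ioo_ae_eq_Icc).2

lemma isOpen_pcIccPos (a b : ℝ) : IsOpen (PcIccPos a b) := by
  have : PcIccPos a b =
      Subtype.val ⁻¹' {μ : ProbabilityMeasure ℝ | 0 < (μ : Measure ℝ) (Ioo a b)} := by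
    ext ν
    simp [PcIccPos, ν.measure_Icc_eq_Ioo]
  rw [this]
  exact (ProbabilityMeasure.isOpen_setOf_pos_apply isOpen_Ioo).preimage continuous_subtype_val

noncomputable def uniformIcc (hab : a < b) : PcR :=
  ⟨⟨volume[|Icc a b], cond_isProbabilityMeasure_of_finite (by simp [hab]) (by simp)⟩,
    fun _ ↦ cond_absolutelyContinuous Real.volume_singleton⟩

lemma uniformIcc_apply_Icc (hab : a < b) : ((uniformIcc hab).1 : Measure ℝ) (Icc a b) = 1 :=
  cond_apply_self (by simp [hab]) (by simp)

noncomputable def PcR.mix (p : unitInterval) (μ ν : PcR) : PcR :=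
  ⟨ProbabilityMeasure.mix p μ.1 ν.1, fun x ↦ by simp [ProbabilityMeasure.mix, μ.2 x, ν.2 x]⟩

lemma dense_pcIccPos (hab : a < b) : Dense (PcIccPos a b) := by
  intro ν
  have hcont : Continuous fun p ↦ PcR.mix p (uniformIcc hab) ν :=
    (ProbabilityMeasure.continuous_mix _ _).subtype_mk _
  have hpos : MapsTo (fun p ↦ PcR.mix p (uniformIcc hab) ν) {0}ᶜ (PcIccPos a b) := by
    intro p hp
    have hp' : 0 < unitInterval.toNNReal p :=
      pos_iff_ne_zero.2 fun h0 ↦ hp (Subtype.ext (congrArg NNReal.toReal h0))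
    simp [PcIccPos, PcR.mix, ProbabilityMeasure.mix, uniformIcc_apply_Icc hab, hp']
  simpa [PcR.mix] using map_mem_closure hcont (dense_compl_singleton (0 : unitInterval) 0) hpos

lemma measure_Icc_ne_zero_of_mem_pcIccPos {ν : PcR} (hν : ν ∈ PcIccPos a b) :
    (ν.1 : Measure ℝ) (Icc a b) ≠ 0 :=
  hν.ne'

/-- The map `Δ`. -/
noncomputable def condIcc (ν : PcIccPos a b) : PcIcc a b :=
  ⟨⟨Measure.comap Subtype.val (ν.1.1.cond (measure_Icc_ne_zero_of_mem_pcIccPos ν.2)),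
    (MeasurableEmbedding.subtype_coe measurableSet_Icc).isProbabilityMeasure_comap
      (by rw [Subtype.range_coe]; exact ae_cond_mem measurableSet_Icc)⟩,
    fun x ↦ by
      change Measure.comap Subtype.val _ {x} = 0
      rw [(MeasurableEmbedding.subtype_coe measurableSet_Icc).comap_apply, image_singleton]
      exact cond_absolutelyContinuous (ν.1.2 x)⟩

lemma toMeasure_condIcc (ν : PcIccPos a b) :
    ((condIcc ν).1 : Measure (Icc a b)) = Measure.comap (↑) (ν.1.1 : Measure ℝ)[|Icc a b] :=
  rfl

lemma toFiniteMeasure_condIcc (ν : PcIccPos a b) : (condIcc ν).1.toFiniteMeasure =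
    (ν.1.1.cond (measure_Icc_ne_zero_of_mem_pcIccPos ν.2)).toFiniteMeasure.comap Subtype.val :=
  rfl

lemma continuous_condIcc : Continuous (condIcc (a := a) (b := b)) := by
  have : FirstCountableTopology PcR := IsInducing.subtypeVal.firstCountableTopology
  refine continuous_iff_continuousAt.2 fun ν ↦ ?_
  rw [ContinuousAt, tendsto_subtype_rng,
    ProbabilityMeasure.tendsto_nhds_iff_toFiniteMeasure_tendsto_nhds, Function.comp_def]
  simp only [toFiniteMeasure_condIcc]
  let C : Set (FiniteMeasure ℝ) := {m | m (range ((↑) : Icc a b → ℝ))ᶜ = 0}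
  have hC (ν' : PcIccPos a b) :
      (ν'.1.1.cond (measure_Icc_ne_zero_of_mem_pcIccPos ν'.2)).toFiniteMeasure ∈ C := by
    simp only [C, mem_ofPred_eq, FiniteMeasure.null_iff_toMeasure_null, Subtype.range_coe]
    exact ae_cond_mem measurableSet_Icc
  have hcond : Tendsto
      (fun ν' : PcIccPos a b ↦
        (ν'.1.1.cond (measure_Icc_ne_zero_of_mem_pcIccPos ν'.2)).toFiniteMeasure)
      (𝓝 ν) (𝓝[C] (ν.1.1.cond (measure_Icc_ne_zero_of_mem_pcIccPos ν.2)).toFiniteMeasure) := by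
    refine tendsto_nhdsWithin_iff.2 ⟨?_, Eventually.of_forall hC⟩
    have hν : Tendsto (fun ν' : PcIccPos a b ↦ ν'.1.1) (𝓝 ν) (𝓝 ν.1.1) :=
      (continuous_subtype_val.comp continuous_subtype_val).tendsto ν
    exact (ProbabilityMeasure.tendsto_nhds_iff_toFiniteMeasure_tendsto_nhds _).1
      (ProbabilityMeasure.tendsto_cond hν _ _ ν.1.measure_frontier_Icc)
  exact ((isClosed_Icc.isClosedEmbedding_subtypeVal).continuousOn_comap_finiteMeasure _
    (hC ν)).tendsto.comp hcond

noncomputable def withCondIcc (ν : PcIccPos a b) (ρ : PcIcc a b) : PcIccPos a b :=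
  ⟨⟨⟨(ν.1.1 : Measure ℝ).restrict (Icc a b)ᶜ + ν.1.1 (Icc a b) • (ρ.1 : Measure (Icc a b)).map (↑),
    by
      rw [← Measure.coe_nnreal_smul, ProbabilityMeasure.ennreal_coeFn_eq_coeFn_toMeasure]
      exact Measure.isProbabilityMeasure_restrict_compl_add_smul_map measurableSet_Icc _⟩,
    fun x ↦
      have := ν.1.nullSingletonClass
      have : NullSingletonClass (ρ.1 : Measure (Icc a b)) := ⟨ρ.2⟩
      Measure.restrict_compl_add_smul_map_singleton _ _ x⟩,
    by
      change 0 < ((ν.1.1 : Measure ℝ).restrict (Icc a b)ᶜ + ((ν.1.1 (Icc a b) : ℝ≥0) : ℝ≥0∞) • _) _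
      rw [Measure.restrict_compl_add_smul_map_apply_self measurableSet_Icc,
        ProbabilityMeasure.ennreal_coeFn_eq_coeFn_toMeasure]
      exact ν.2⟩

lemma continuous_withCondIcc (ν : PcIccPos a b) : Continuous (withCondIcc ν) := by
  refine ((ProbabilityMeasure.toFiniteMeasure_isEmbedding ℝ).continuous_iff.2 ?_).subtype_mk _
    |>.subtype_mk _
  change Continuous fun ρ : PcIcc a b ↦ ν.1.1.toFiniteMeasure.restrict (Icc a b)ᶜ +
    ν.1.1 (Icc a b) • ρ.1.toFiniteMeasure.map (↑)
  fun_prop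

lemma toMeasure_withCondIcc (ν : PcIccPos a b) (ρ : PcIcc a b) :
    ((withCondIcc ν ρ).1.1 : Measure ℝ) = (ν.1.1 : Measure ℝ).restrict (Icc a b)ᶜ +
      (ν.1.1 : Measure ℝ) (Icc a b) • (ρ.1 : Measure (Icc a b)).map (↑) := by
  rw [← ProbabilityMeasure.ennreal_coeFn_eq_coeFn_toMeasure]
  rfl

lemma condIcc_withCondIcc (ν : PcIccPos a b) (ρ : PcIcc a b) : condIcc (withCondIcc ν ρ) = ρ := by
  refine Subtype.ext (ProbabilityMeasure.toMeasure_injective ?_)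
  rw [toMeasure_condIcc, toMeasure_withCondIcc]
  exact Measure.comap_cond_restrict_compl_add_smul_map measurableSet_Icc
    (measure_Icc_ne_zero_of_mem_pcIccPos ν.2) (measure_ne_top _ _) _

lemma withCondIcc_condIcc (ν : PcIccPos a b) : withCondIcc ν (condIcc ν) = ν := by
  refine Subtype.ext (Subtype.ext (ProbabilityMeasure.toMeasure_injective ?_))
  rw [toMeasure_withCondIcc, toMeasure_condIcc]
  exact Measure.restrict_compl_add_smul_map_comap_cond measurableSet_Icc
    (measure_Icc_ne_zero_of_mem_pcIccPos ν.2) (measure_ne_top _ _)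

lemma dense_condIcc_preimage {A : Set (PcIcc a b)} (hA : Dense A) : Dense (condIcc ⁻¹' A) :=
  hA.preimage_of_forall_exists_section fun ν ↦
    ⟨withCondIcc ν, continuous_withCondIcc ν, condIcc_withCondIcc ν, withCondIcc_condIcc ν⟩

theorem statement12 (a b : ℝ) (hab : a < b) :
    (IsOpen (PcIccPos a b) ∧ Dense (PcIccPos a b)) ∧
    ∃ Δ : PcIccPos a b → PcIcc a b,
      (∀ ν : PcIccPos a b, (Δ ν).1.toMeasure =
          Measure.comap Subtype.val
            ((ν.1.1.toMeasure (Set.Icc a b))⁻¹ •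
              ν.1.1.toMeasure.restrict (Set.Icc a b))) ∧
      Continuous Δ ∧
      (∀ A : Set (PcIcc a b), Dense A → Dense (Δ ⁻¹' A)) ∧
      (∀ A : Set (PcIcc a b), IsGδ A → Dense A →
        IsGδ (Δ ⁻¹' A) ∧ Dense (Δ ⁻¹' A)) :=
  ⟨⟨isOpen_pcIccPos a b, dense_pcIccPos hab⟩, condIcc, fun _ ↦ rfl, continuous_condIcc,
    fun _ ↦ dense_condIcc_preimage,
    fun _ hGδ hA ↦ ⟨hGδ.preimage continuous_condIcc, dense_condIcc_preimage hA⟩⟩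
end

section
/- Let σ and ν be Borel probability measures on ℝ. Then σ and ν are mutually singular if and only if for every n ∈ ℕ, n ≥ 1, there exists a set 𝓞 ⊂ ℝ which is a finite union of open intervals such that σ(𝓞) < 1/n and ν(𝓞) > 1 − 1/n. -/
/-!
If `σ ⟂ₘ ν`, outer regularity of `σ` puts a `σ`-null, `ν`-conull set inside an open set `U` of
small `σ`-measure; `U` is a countable union of rational open intervals, and continuity from below
selects finitely many of them carrying almost all the `ν`-mass of `U`.
Conversely, taking `n = 2 ^ k` gives sets `O k` with `∑ σ (O k) < ∞` and `∑ ν (O k)ᶜ < ∞`, so by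
Borel–Cantelli `limsup O` is `σ`-null while its complement, contained in `limsup (O ·)ᶜ`, is
`ν`-null.
-/

open MeasureTheory Filter
open scoped ENNReal

namespace MeasureTheory

variable {α ι : Type*} [MeasurableSpace α]

theorem exists_finset_lt_measure_biUnion [Countable ι] {μ : Measure α} {s : ι → Set α}
    {r : ℝ≥0∞} (hr : r < μ (⋃ i, s i)) : ∃ t : Finset ι, r < μ (⋃ i ∈ t, s i) := by
  have hmono : Monotone fun t : Finset ι ↦ ⋃ i ∈ t, s i :=
    fun _ _ h ↦ Set.biUnion_subset_biUnion_left h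
  rwa [Set.iUnion_eq_iUnion_finset, hmono.directed_le.measure_iUnion, lt_iSup_iff] at hr

theorem Measure.MutuallySingular.exists_isOpen_measure_lt_compl_null [TopologicalSpace α]
    [OpensMeasurableSpace α] {σ ν : Measure α} [σ.OuterRegular] (h : σ ⟂ₘ ν) {ε : ℝ≥0∞}
    (hε : ε ≠ 0) : ∃ U, IsOpen U ∧ σ U < ε ∧ ν Uᶜ = 0 := by
  obtain ⟨s, -, hσs, hνs⟩ := h
  obtain ⟨U, hsU, hU, hσU⟩ := s.exists_isOpen_lt_of_lt ε (hσs ▸ pos_iff_ne_zero.2 hε)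
  exact ⟨U, hU, hσU, measure_mono_null (Set.compl_subset_compl.2 hsU) hνs⟩

theorem Measure.MutuallySingular.of_tsum_ne_top {σ ν : Measure α} {O : ℕ → Set α}
    (hO : ∀ k, MeasurableSet (O k)) (hσ : ∑' k, σ (O k) ≠ ∞) (hν : ∑' k, ν (O k)ᶜ ≠ ∞) :
    σ ⟂ₘ ν := by
  refine ⟨limsup O atTop, .measurableSet_limsup hO, measure_limsup_atTop_eq_zero hσ, ?_⟩
  refine measure_mono_null ?_ (measure_limsup_atTop_eq_zero hν)
  rw [limsup_compl]
  exact liminf_le_limsup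

end MeasureTheory

theorem IsOpen.exists_finset_Ioo_subset_lt_measure {U : Set ℝ} (hU : IsOpen U) {μ : Measure ℝ}
    {r : ℝ≥0∞} (hr : r < μ U) :
    ∃ S : Finset (ℝ × ℝ), ⋃ p ∈ S, Set.Ioo p.1 p.2 ⊆ U ∧ r < μ (⋃ p ∈ S, Set.Ioo p.1 p.2) := by
  let I : {q : ℚ × ℚ // Set.Ioo (q.1 : ℝ) q.2 ⊆ U} → Set ℝ := fun q ↦ Set.Ioo q.1.1 q.1.2
  have hUI : U = ⋃ q, I q := by
    refine subset_antisymm (fun x hx ↦ ?_) (Set.iUnion_subset fun q ↦ q.2)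
    obtain ⟨l, u, ⟨hl, hu⟩, hlu⟩ := mem_nhds_iff_exists_Ioo_subset.1 (hU.mem_nhds hx)
    obtain ⟨a, hla, hax⟩ := exists_rat_btwn hl
    obtain ⟨b, hxb, hbu⟩ := exists_rat_btwn hu
    exact Set.mem_iUnion.2
      ⟨⟨(a, b), fun y hy ↦ hlu ⟨hla.trans hy.1, hy.2.trans hbu⟩⟩, hax, hxb⟩
  rw [hUI] at hr ⊢
  obtain ⟨t, ht⟩ := exists_finset_lt_measure_biUnion hr
  refine ⟨t.image fun q ↦ ((q.1.1 : ℝ), (q.1.2 : ℝ)), ?_, ?_⟩ <;>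
    rw [Finset.set_biUnion_finset_image]
  exacts [Set.iUnion₂_subset fun q _ ↦ Set.subset_iUnion I q, ht]

theorem statement14 (σ ν : Measure ℝ) [IsProbabilityMeasure σ] [IsProbabilityMeasure ν] :
    σ ⟂ₘ ν ↔
      ∀ n : ℕ, 1 ≤ n → ∃ O : Set ℝ,
        (∃ S : Finset (ℝ × ℝ), O = ⋃ p ∈ S, Set.Ioo p.1 p.2) ∧
        σ O < 1 / (n : ℝ≥0∞) ∧ 1 - 1 / (n : ℝ≥0∞) < ν O := by
  constructor
  · intro h n _
    have hn : 1 / (n : ℝ≥0∞) ≠ 0 := by simp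
    obtain ⟨U, hU, hσU, hνU⟩ := h.exists_isOpen_measure_lt_compl_null hn
    have hνU : 1 - 1 / (n : ℝ≥0∞) < ν U := by
      rw [(prob_compl_eq_zero_iff hU.measurableSet).1 hνU]
      exact ENNReal.sub_lt_self ENNReal.one_ne_top one_ne_zero hn
    obtain ⟨S, hSU, hνS⟩ := hU.exists_finset_Ioo_subset_lt_measure hνU
    exact ⟨_, ⟨S, rfl⟩, (measure_mono hSU).trans_lt hσU, hνS⟩
  · intro h
    have hO : ∀ k : ℕ, ∃ O, MeasurableSet O ∧ σ O ≤ 2⁻¹ ^ k ∧ ν Oᶜ ≤ 2⁻¹ ^ k := by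
      intro k
      obtain ⟨O, ⟨S, rfl⟩, hσO, hνO⟩ := h (2 ^ k) Nat.one_le_two_pow
      have hO : MeasurableSet (⋃ p ∈ S, Set.Ioo p.1 p.2) :=
        S.measurableSet_biUnion fun _ _ ↦ measurableSet_Ioo
      have h2k : 1 / ((2 ^ k : ℕ) : ℝ≥0∞) = 2⁻¹ ^ k := by simp [ENNReal.inv_pow]
      refine ⟨_, hO, h2k ▸ hσO.le, ?_⟩
      rw [prob_compl_eq_one_sub hO, ← h2k]
      exact tsub_le_iff_tsub_le.1 hνO.le
    choose O hOm hσO hνO using hO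
    have hgeom : ∑' k : ℕ, (2⁻¹ : ℝ≥0∞) ^ k ≠ ∞ := by simp [ENNReal.tsum_geometric]
    exact .of_tsum_ne_top hOm (ne_top_of_le_ne_top hgeom (ENNReal.tsum_le_tsum hσO))
      (ne_top_of_le_ne_top hgeom (ENNReal.tsum_le_tsum hνO))
end
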